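/- arXiv:1306.1686 — 2 statements merged into one kernel-verified Lean document; each statement's English description precedes it below -/
import Mathlib

section
/- Let δ ∈ [0,1], let a ∈ H and r₀ > 0 with the closed ball B̄(a, r₀) contained in C, and define Π^δ z = P z − δ·(z − P z). For z ∈ H let z₀ = z and z_{n+1} = Π^δ z_n. Then the series ∑_{i=0}^∞ ‖P z_i − z_i‖ converges and ∑_{i=0}^∞ ‖P z_i − z_i‖ ≤ ‖z − a‖² / (2 r₀ (1 + δ)). -/
/-!
Write `v = z - P z`. Since `B̄(a, r₀) ⊆ C` contains the point `a + r₀ v / ‖v‖`, the variational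
inequality of the projection gives `r₀ ‖v‖ ≤ ⟪v, P z - a⟫`. Expanding the square of
`Π^δ z - a = (z - a) - (1 + δ) v` then shows that each step decreases `‖z_n - a‖²` by at least
`2 r₀ (1 + δ) ‖P z_n - z_n‖`, and the series telescopes.
-/

open scoped RealInnerProductSpace

open Metric

theorem summable_and_tsum_le_of_le_sub_succ {f u : ℕ → ℝ} (hf : ∀ n, 0 ≤ f n)
    (hu : ∀ n, 0 ≤ u n) (h : ∀ n, f n ≤ u n - u (n + 1)) :
    Summable f ∧ ∑' n, f n ≤ u 0 := by
  have hpartial (n : ℕ) : ∑ i ∈ Finset.range n, f i ≤ u 0 :=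
    calc ∑ i ∈ Finset.range n, f i ≤ ∑ i ∈ Finset.range n, (u i - u (i + 1)) :=
          Finset.sum_le_sum fun i _ => h i
      _ = u 0 - u n := Finset.sum_range_sub' u n
      _ ≤ u 0 := sub_le_self _ (hu n)
  have hsum := summable_of_sum_range_le hf hpartial
  exact ⟨hsum, hsum.tsum_le_of_sum_range_le hpartial⟩

section InnerProductSpace

variable {H : Type*} [NormedAddCommGroup H] [InnerProductSpace ℝ H]

theorem exists_mem_closedBall_inner_eq (v a : H) {r : ℝ} (hr : 0 ≤ r) :
    ∃ c ∈ closedBall a r, ⟪v, c⟫ = ⟪v, a⟫ + r * ‖v‖ := by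
  -- `r / ‖v‖ = 0` when `v = 0`, so the same witness works in both cases
  refine ⟨a + (r / ‖v‖) • v, ?_, ?_⟩
  · rw [mem_closedBall, dist_eq_norm, add_sub_cancel_left, norm_smul, Real.norm_eq_abs,
      abs_of_nonneg (by positivity)]
    rcases eq_or_ne ‖v‖ 0 with hv | hv
    · simp [hv, hr]
    · rw [div_mul_cancel₀ _ hv]
  · rw [inner_add_right, real_inner_smul_right, real_inner_self_eq_norm_sq]
    rcases eq_or_ne ‖v‖ 0 with hv | hv
    · simp [hv]
    · field_simp

theorem mul_norm_le_inner_of_closedBall_subset {C : Set H} {a p z : H} {r : ℝ} (hr : 0 ≤ r)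
    (hball : closedBall a r ⊆ C) (hp : ∀ c ∈ C, ⟪p - z, p - c⟫ ≤ 0) :
    r * ‖z - p‖ ≤ ⟪z - p, p - a⟫ := by
  obtain ⟨c, hc, hvc⟩ := exists_mem_closedBall_inner_eq (z - p) a hr
  have hvi : ⟪z - p, c⟫ ≤ ⟪z - p, p⟫ := by
    have := hp c (hball hc)
    rw [← neg_sub z p, inner_neg_left, inner_sub_right] at this
    linarith
  rw [inner_sub_right]
  linarith

theorem two_mul_mul_norm_le_sq_sub_sq {a p z : H} {r δ : ℝ} (hδ₀ : -1 ≤ δ) (hδ₁ : δ ≤ 1)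
    (h : r * ‖z - p‖ ≤ ⟪z - p, p - a⟫) :
    2 * r * (1 + δ) * ‖p - z‖ ≤ ‖z - a‖ ^ 2 - ‖p - δ • (z - p) - a‖ ^ 2 := by
  set v := z - p
  have hstep : p - δ • v - a = (z - a) - (1 + δ) • v := by module
  have hsplit : ⟪v, z - a⟫ = ‖v‖ ^ 2 + ⟪v, p - a⟫ := by
    rw [show z - a = v + (p - a) by module, inner_add_right, real_inner_self_eq_norm_sq]
  have hexp : ‖p - δ • v - a‖ ^ 2 =
      ‖z - a‖ ^ 2 - 2 * (1 + δ) * ⟪v, z - a⟫ + (1 + δ) ^ 2 * ‖v‖ ^ 2 := by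
    rw [hstep, norm_sub_sq_real, real_inner_smul_right, norm_smul, Real.norm_eq_abs, mul_pow,
      sq_abs, real_inner_comm]
    ring
  rw [norm_sub_rev, hexp, hsplit]
  nlinarith [mul_le_mul_of_nonneg_left h (by linarith : (0 : ℝ) ≤ 1 + δ),
    mul_nonneg (mul_nonneg (by linarith : (0 : ℝ) ≤ 1 + δ) (by linarith : (0 : ℝ) ≤ 1 - δ))
      (sq_nonneg ‖v‖)]

end InnerProductSpace

theorem stmt_3_general {H : Type*} [NormedAddCommGroup H] [InnerProductSpace ℝ H]
    (C : Set H)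
    (P : H → H)
    (hP : ∀ z : H, P z ∈ C ∧ ∀ c ∈ C, ⟪P z - z, P z - c⟫ ≤ 0)
    (δ : ℝ) (hδ : δ ∈ Set.Icc (0 : ℝ) 1)
    (a : H) (r₀ : ℝ) (hr₀ : 0 < r₀) (hball : Metric.closedBall a r₀ ⊆ C)
    (Pd : H → H) (hPd : ∀ z : H, Pd z = P z - δ • (z - P z))
    (z : H) (zseq : ℕ → H) (hz0 : zseq 0 = z)
    (hzrec : ∀ n : ℕ, zseq (n + 1) = Pd (zseq n)) :
    Summable (fun i : ℕ => ‖P (zseq i) - zseq i‖) ∧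
      ∑' i : ℕ, ‖P (zseq i) - zseq i‖ ≤ ‖z - a‖ ^ 2 / (2 * r₀ * (1 + δ)) := by
  obtain ⟨hδ₀, hδ₁⟩ := hδ
  have hpos : 0 < 2 * r₀ * (1 + δ) := by positivity
  have hdecrease (n : ℕ) : ‖P (zseq n) - zseq n‖ ≤
      ‖zseq n - a‖ ^ 2 / (2 * r₀ * (1 + δ)) - ‖zseq (n + 1) - a‖ ^ 2 / (2 * r₀ * (1 + δ)) := by
    rw [← sub_div, le_div_iff₀ hpos, mul_comm, hzrec, hPd]
    exact two_mul_mul_norm_le_sq_sub_sq (by linarith) hδ₁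
      (mul_norm_le_inner_of_closedBall_subset hr₀.le hball (hP _).2)
  have := summable_and_tsum_le_of_le_sub_succ (fun _ => norm_nonneg _)
    (fun _ => by positivity) hdecrease
  rwa [hz0] at this

theorem stmt_3 {H : Type*} [NormedAddCommGroup H] [InnerProductSpace ℝ H] [CompleteSpace H]
    (C : Set H) (hCne : C.Nonempty) (hCcl : IsClosed C) (hCcv : Convex ℝ C)
    (P : H → H)
    (hP : ∀ z : H, P z ∈ C ∧ ∀ c ∈ C, ⟪P z - z, P z - c⟫ ≤ 0)
    (δ : ℝ) (hδ : δ ∈ Set.Icc (0 : ℝ) 1)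
    (a : H) (r₀ : ℝ) (hr₀ : 0 < r₀) (hball : Metric.closedBall a r₀ ⊆ C)
    (Pd : H → H) (hPd : ∀ z : H, Pd z = P z - δ • (z - P z))
    (z : H) (zseq : ℕ → H) (hz0 : zseq 0 = z)
    (hzrec : ∀ n : ℕ, zseq (n + 1) = Pd (zseq n)) :
    Summable (fun i : ℕ => ‖P (zseq i) - zseq i‖) ∧
      ∑' i : ℕ, ‖P (zseq i) - zseq i‖ ≤ ‖z - a‖ ^ 2 / (2 * r₀ * (1 + δ)) :=
  stmt_3_general C P hP δ hδ a r₀ hr₀ hball Pd hPd z zseq hz0 hzrec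
end

section
/- Let A : H → Set H be a maximal monotone operator and let u₀ belong to the interior of the domain D(A) = {x ∈ H : A x ≠ ∅}. Then A is locally bounded at u₀: there exist r₀ > 0 and M ∈ ℝ such that the closed ball B̄(u₀, r₀) is contained in D(A) and ‖v‖ ≤ M for every u ∈ B̄(u₀, r₀) and every v ∈ A u. -/
open scoped RealInnerProductSpace

open Filter Metric Set Topology

/-! On a closed ball `B̄(u₀, r)` inside the domain, monotonicity tested against a point
`x = u₀ + w` of the ball and some `y ∈ A x` gives `⟪v, w⟫ ≤ 2r‖y‖ + ‖v‖‖u - u₀‖` for all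
`u ∈ B̄(u₀, r)` and `v ∈ A u`. Hence the functionals `⟪v, ·⟫ / (1 + ‖v‖‖u - u₀‖)` are pointwise
bounded near `0`, so by Banach–Steinhaus their norms are bounded by some `C`. The resulting
inequality `‖v‖ ≤ C (1 + ‖v‖‖u - u₀‖)` forces `‖v‖ ≤ 2C` as soon as `‖u - u₀‖ ≤ 1 / (2C)`. -/

theorem ContinuousLinearMap.exists_forall_norm_le_of_eventually_bddAbove {E ι : Type*}
    [NormedAddCommGroup E] [NormedSpace ℝ E] [CompleteSpace E] {g : ι → E →L[ℝ] ℝ}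
    (h : ∀ᶠ x in 𝓝 0, BddAbove (range fun i ↦ g i x)) : ∃ C, ∀ i, ‖g i‖ ≤ C := by
  refine banach_steinhaus fun x ↦ ?_
  have hsmul (y : E) : Tendsto (fun t : ℝ ↦ t • y) (𝓝[>] 0) (𝓝 0) := by
    have : Continuous fun t : ℝ ↦ t • y := continuous_id.smul continuous_const
    simpa using (this.tendsto 0).mono_left nhdsWithin_le_nhds
  obtain ⟨t, ⟨⟨C₁, hC₁⟩, ⟨C₂, hC₂⟩⟩, ht⟩ :=
    (((hsmul x).eventually h).and ((hsmul (-x)).eventually h)).and self_mem_nhdsWithin |>.exists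
  refine ⟨max C₁ C₂ / t, fun i ↦ ?_⟩
  have h₁ : t * g i x ≤ C₁ := by simpa using hC₁ (mem_range_self i)
  have h₂ : -(t * g i x) ≤ C₂ := by simpa using hC₂ (mem_range_self i)
  have : |t * g i x| ≤ max C₁ C₂ :=
    abs_le.2 ⟨by linarith [le_max_right C₁ C₂], h₁.trans (le_max_left _ _)⟩
  rwa [abs_mul, abs_of_pos ht, mul_comm, ← le_div_iff₀ ht] at this

section MonotoneOperator

variable {H : Type*} [NormedAddCommGroup H] [InnerProductSpace ℝ H]

def IsMonotoneOperator (A : H → Set H) : Prop :=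
  ∀ x u y v : H, y ∈ A x → v ∈ A u → 0 ≤ ⟪v - y, u - x⟫

namespace IsMonotoneOperator

variable {A : H → Set H}

theorem inner_le (hA : IsMonotoneOperator A) {x u y v : H} (hy : y ∈ A x) (hv : v ∈ A u) :
    ⟪v, x - u⟫ ≤ ⟪y, x - u⟫ := by
  have := hA x u y v hy hv
  simp only [inner_sub_left, inner_sub_right] at this ⊢
  linarith

theorem inner_sub_center_le (hA : IsMonotoneOperator A) {u₀ x u y v : H} {r : ℝ}
    (hx : x ∈ closedBall u₀ r) (hu : u ∈ closedBall u₀ r) (hy : y ∈ A x) (hv : v ∈ A u) :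
    ⟪v, x - u₀⟫ ≤ 2 * r * ‖y‖ + ‖v‖ * ‖u - u₀‖ := by
  have hxu : ‖x - u‖ ≤ 2 * r := by
    rw [← dist_eq_norm]
    linarith [dist_triangle_right x u u₀, mem_closedBall.1 hx, mem_closedBall.1 hu]
  calc ⟪v, x - u₀⟫ = ⟪v, x - u⟫ + ⟪v, u - u₀⟫ := by rw [← inner_add_right, sub_add_sub_cancel]
    _ ≤ ‖y‖ * ‖x - u‖ + ‖v‖ * ‖u - u₀‖ :=
      add_le_add ((hA.inner_le hy hv).trans (real_inner_le_norm _ _)) (real_inner_le_norm _ _)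
    _ ≤ 2 * r * ‖y‖ + ‖v‖ * ‖u - u₀‖ := by nlinarith [norm_nonneg y]

theorem exists_norm_le_mul_one_add [CompleteSpace H] (hA : IsMonotoneOperator A) {u₀ : H}
    {r : ℝ} (hr : 0 < r) (hD : closedBall u₀ r ⊆ {x | (A x).Nonempty}) :
    ∃ C, ∀ u ∈ closedBall u₀ r, ∀ v ∈ A u, ‖v‖ ≤ C * (1 + ‖v‖ * ‖u - u₀‖) := by
  let g : {p : H × H // p.1 ∈ closedBall u₀ r ∧ p.2 ∈ A p.1} → H →L[ℝ] ℝ :=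
    fun p ↦ (1 + ‖p.1.2‖ * ‖p.1.1 - u₀‖)⁻¹ • innerSL ℝ p.1.2
  have hg : ∀ᶠ w in 𝓝 0, BddAbove (range fun p ↦ g p w) := by
    filter_upwards [ball_mem_nhds (0 : H) hr] with w hw
    have hx : u₀ + w ∈ closedBall u₀ r := by
      simpa [dist_eq_norm] using (mem_ball_zero_iff.1 hw).le
    obtain ⟨y, hy⟩ := hD hx
    refine ⟨2 * r * ‖y‖ + 1, forall_mem_range.2 fun ⟨(u, v), hu, hv⟩ ↦ ?_⟩
    have hbound := hA.inner_sub_center_le hx hu hy hv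
    rw [add_sub_cancel_left] at hbound
    simp only [g, smul_apply, innerSL_apply_apply, smul_eq_mul]
    rw [inv_mul_le_iff₀ (by positivity)]
    nlinarith [mul_nonneg (by positivity : 0 ≤ 2 * r * ‖y‖) (by positivity : 0 ≤ ‖v‖ * ‖u - u₀‖)]
  obtain ⟨C, hC⟩ := ContinuousLinearMap.exists_forall_norm_le_of_eventually_bddAbove hg
  refine ⟨C, fun u hu v hv ↦ ?_⟩
  have hden : 0 < 1 + ‖v‖ * ‖u - u₀‖ := by positivity
  have := hC ⟨(u, v), hu, hv⟩
  rwa [norm_smul, innerSL_apply_norm, norm_inv, Real.norm_of_nonneg hden.le,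
    inv_mul_le_iff₀ hden, mul_comm] at this

end IsMonotoneOperator

end MonotoneOperator

theorem stmt_10_general {H : Type*} [NormedAddCommGroup H] [InnerProductSpace ℝ H] [CompleteSpace H]
    (A : H → Set H)
    (hmono : ∀ x u y v : H, y ∈ A x → v ∈ A u → 0 ≤ ⟪v - y, u - x⟫)
    (u₀ : H) (hu₀ : u₀ ∈ interior {x : H | (A x).Nonempty}) :
    ∃ r₀ : ℝ, 0 < r₀ ∧ ∃ M : ℝ,
      Metric.closedBall u₀ r₀ ⊆ {x : H | (A x).Nonempty} ∧
      ∀ u ∈ Metric.closedBall u₀ r₀, ∀ v ∈ A u, ‖v‖ ≤ M := by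
  obtain ⟨r, hr, hD⟩ := nhds_basis_closedBall.mem_iff.1 (mem_interior_iff_mem_nhds.1 hu₀)
  obtain ⟨C, hC⟩ := IsMonotoneOperator.exists_norm_le_mul_one_add hmono hr hD
  set K := max C 1
  have hK : 0 < K := lt_max_of_lt_right one_pos
  have hsub : closedBall u₀ (min r (1 / (2 * K))) ⊆ closedBall u₀ r :=
    closedBall_subset_closedBall (min_le_left _ _)
  refine ⟨min r (1 / (2 * K)), by positivity, 2 * K, hsub.trans hD, fun u hu v hv ↦ ?_⟩
  have hKu : K * ‖u - u₀‖ ≤ 1 / 2 := by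
    have := (mem_closedBall_iff_norm.1 hu).trans (min_le_right _ _)
    rw [le_div_iff₀ (by positivity)] at this
    linarith
  have : ‖v‖ ≤ K + 1 / 2 * ‖v‖ :=
    calc ‖v‖ ≤ K * (1 + ‖v‖ * ‖u - u₀‖) :=
          (hC u (hsub hu) v hv).trans (by gcongr; exact le_max_left _ _)
      _ = K + (K * ‖u - u₀‖) * ‖v‖ := by ring
      _ ≤ K + 1 / 2 * ‖v‖ := by gcongr
  linarith

theorem stmt_10 {H : Type*} [NormedAddCommGroup H] [InnerProductSpace ℝ H] [CompleteSpace H]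
    (A : H → Set H)
    (hmono : ∀ x u y v : H, y ∈ A x → v ∈ A u → 0 ≤ ⟪v - y, u - x⟫)
    (hmax : ∀ u v : H, (∀ x y : H, y ∈ A x → 0 ≤ ⟪v - y, u - x⟫) → v ∈ A u)
    (u₀ : H) (hu₀ : u₀ ∈ interior {x : H | (A x).Nonempty}) :
    ∃ r₀ : ℝ, 0 < r₀ ∧ ∃ M : ℝ,
      Metric.closedBall u₀ r₀ ⊆ {x : H | (A x).Nonempty} ∧
      ∀ u ∈ Metric.closedBall u₀ r₀, ∀ v ∈ A u, ‖v‖ ≤ M :=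
  stmt_10_general A hmono u₀ hu₀
end
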